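/- arXiv:2004.07357 — 9 statements merged into one kernel-verified Lean document; each statement's English description precedes it below -/
import Mathlib

section
/- If the orbit of x₀ ∈ ℕ under Q is bounded, then either the orbit reaches 0 (there exists N with Q^[N](x₀) = 0) or the orbit reaches a number of the form 2^m + 1 with m ≥ 1 (there exist N and m ≥ 1 with Q^[N](x₀) = 2^m + 1), and hence reaches the m-cycle through 2^m + 1. -/
/-- The divide-or-choose-2 rule: `Q n = n / 2` if `n` is even,
`Q n = n * (n - 1) / 2` (i.e. `n` choose 2) if `n` is odd. -/
def Q (n : ℕ) : ℕ := if Even n then n / 2 else n * (n - 1) / 2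

/-- odd part of n -/
def op (n : ℕ) : ℕ := n / 2 ^ n.factorization 2

lemma op_mul (a b : ℕ) : op (a * b) = op a * op b := Nat.ordCompl_mul a b 2

lemma op_two_mul (a : ℕ) : op (2 * a) = op a := by
  rw [op_mul]
  have : op 2 = 1 := by
    simp [op, Nat.Prime.factorization_self Nat.prime_two]
  simp [this]

lemma op_odd {n : ℕ} (h : Odd n) : op n = n := by
  have : n.factorization 2 = 0 :=
    Nat.factorization_eq_zero_of_not_dvd (by
      have := Nat.odd_iff.mp h; omega)
  simp [op, this]

lemma op_pos {n : ℕ} (h : n ≠ 0) : 0 < op n := Nat.ordCompl_pos 2 h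

lemma Q_even {n : ℕ} (h : Even n) : Q n = n / 2 := by simp [Q, h]

lemma Q_odd {n : ℕ} (h : Odd n) : Q n = n * ((n - 1) / 2) := by
  have h2 : (2 : ℕ) ∣ n - 1 := by
    obtain ⟨k, hk⟩ := h; omega
  rw [Q, if_neg (Nat.not_even_iff_odd.mpr h), Nat.mul_div_assoc n h2]

lemma op_Q_ge {n : ℕ} (h : 2 ≤ n) : op n ≤ op (Q n) := by
  rcases Nat.even_or_odd n with he | ho
  · rw [Q_even he]
    obtain ⟨k, hk⟩ := he
    have : n = 2 * k := by omega
    rw [this, op_two_mul, Nat.mul_div_cancel_left k (by norm_num)]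
  · rw [Q_odd ho, op_mul, op_odd ho]
    have h1 : (n - 1) / 2 ≠ 0 := by have := Nat.odd_iff.mp ho; omega
    nlinarith [op_pos h1]

lemma op_Q_odd {n : ℕ} (ho : Odd n) (h : 2 ≤ n) (heq : op (Q n) = op n) :
    ∃ m : ℕ, 1 ≤ m ∧ n = 2 ^ m + 1 := by
  have h2 : n - 1 = 2 * ((n - 1) / 2) := by
    obtain ⟨k, hk⟩ := ho; omega
  have key : op (Q n) = n * op (n - 1) := by
    rw [Q_odd ho, op_mul, op_odd ho]
    conv_rhs => rw [h2, op_two_mul]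
  rw [op_odd ho] at heq
  have hop1 : op (n - 1) = 1 := by
    have hn : 0 < n := by omega
    nlinarith [key, heq]
  -- n - 1 = 2 ^ (factorization)
  have hdvd : 2 ^ (n - 1).factorization 2 ∣ n - 1 := Nat.ordProj_dvd (n - 1) 2
  have hpow : n - 1 = 2 ^ (n - 1).factorization 2 := by
    have h3 := Nat.div_mul_cancel hdvd
    have hop1' : (n - 1) / 2 ^ (n - 1).factorization 2 = 1 := hop1
    rw [hop1'] at h3
    omega
  refine ⟨(n - 1).factorization 2, ?_, by omega⟩
  by_contra hm
  have : (n - 1).factorization 2 = 0 := by omega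
  rw [this] at hpow; omega

theorem stmt_2 (x₀ : ℕ) (B : ℕ) (hB : ∀ n : ℕ, Q^[n] x₀ ≤ B) :
    (∃ N : ℕ, Q^[N] x₀ = 0) ∨
    (∃ N m : ℕ, 1 ≤ m ∧ Q^[N] x₀ = 2 ^ m + 1) := by
  classical
  by_cases hsmall : ∃ k, Q^[k] x₀ ≤ 1
  · left
    obtain ⟨k, hk⟩ := hsmall
    refine ⟨k + 1, ?_⟩
    rw [Function.iterate_succ_apply']
    interval_cases h : Q^[k] x₀ <;> simp_all [Q]
  · push_neg at hsmall
    have h2 : ∀ k, 2 ≤ Q^[k] x₀ := fun k => hsmall k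
    set a : ℕ → ℕ := fun k => op (Q^[k] x₀) with ha
    have hmono : Monotone a := by
      apply monotone_nat_of_le_succ
      intro k
      have := op_Q_ge (h2 k)
      rwa [← Function.iterate_succ_apply' Q k x₀] at this
    have haB : ∀ k, a k ≤ B := fun k => le_trans (Nat.ordCompl_le _ 2) (hB k)
    -- a eventually constant: pick k₀ minimizing B - a k
    have hex : ∃ n, ∃ k, B - a k = n := ⟨B - a 0, 0, rfl⟩
    obtain ⟨k₀, hk₀⟩ := Nat.find_spec hex
    have hconst : ∀ k, k₀ ≤ k → a k = a k₀ := by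
      intro k hk
      have h1 : a k₀ ≤ a k := hmono hk
      have h2' : Nat.find hex ≤ B - a k := Nat.find_le ⟨k, rfl⟩
      have := haB k; have := haB k₀
      omega
    -- find minimal value at indices ≥ k₀
    have hex2 : ∃ v, ∃ k, k₀ ≤ k ∧ Q^[k] x₀ = v := ⟨Q^[k₀] x₀, k₀, le_refl _, rfl⟩
    obtain ⟨k₁, hk₁, hv⟩ := Nat.find_spec hex2
    set v := Nat.find hex2 with hvdef
    have hvodd : Odd v := by
      rcases Nat.even_or_odd v with he | ho
      · exfalso
        have hstep : Q^[k₁ + 1] x₀ = v / 2 := by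
          rw [Function.iterate_succ_apply', hv, Q_even he]
        have : v ≤ v / 2 := by
          have h5 : Nat.find hex2 ≤ v / 2 := Nat.find_le ⟨k₁ + 1, by omega, hstep⟩
          omega
        have := h2 k₁; rw [hv] at this
        omega
      · exact ho
    have hv2 : 2 ≤ v := by have := h2 k₁; omega
    have heq : op (Q v) = op v := by
      have e1 : a k₁ = a k₀ := hconst k₁ hk₁
      have e2 : a (k₁ + 1) = a k₀ := hconst (k₁ + 1) (by omega)
      have : a (k₁ + 1) = op (Q v) := by
        simp only [ha]
        rw [Function.iterate_succ_apply', hv]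
      rw [this] at e2
      have : a k₁ = op v := by simp only [ha]; rw [hv]
      rw [this] at e1
      omega
    obtain ⟨m, hm1, hm2⟩ := op_Q_odd hvodd hv2 heq
    right
    exact ⟨k₁, m, hm1, by omega⟩
end

section
/- Let m ≥ 2 and let x_j = Q^[j](2^m + 3) for j ≥ 0. Then for every j with 1 ≤ j ≤ m − 1, x_j = 2^(m−j)·(x₀ + 2)(x₁ + 2)⋯(x_{j−1} + 2) + 3. -/
lemma Q_key (k P : ℕ) (hk : 1 ≤ k) :
    Q (2 ^ k * P + 3) = 2 ^ (k - 1) * P * (2 ^ k * P + 3 + 2) + 3 := by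
  obtain ⟨k', rfl⟩ : ∃ k', k = k' + 1 := ⟨k - 1, by omega⟩
  set b := 2 ^ k' * P with hb
  have h1 : 2 ^ (k' + 1) * P = 2 * b := by rw [hb]; ring
  have hodd : ¬ Even (2 ^ (k' + 1) * P + 3) := by
    rw [h1]; simp [Nat.even_add, parity_simps]
  rw [Q, if_neg hodd, h1]
  have h2 : (2 * b + 3) * (2 * b + 3 - 1) = 2 * ((2 * b + 3) * (b + 1)) := by
    have : 2 * b + 3 - 1 = 2 * (b + 1) := by omega
    rw [this]; ring
  rw [h2, Nat.mul_div_cancel_left _ (by norm_num)]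
  simp only [Nat.add_sub_cancel]
  ring

theorem stmt_6 (m : ℕ) (hm : 2 ≤ m) (x : ℕ → ℕ) (hx : ∀ j, x j = Q^[j] (2 ^ m + 3)) :
    ∀ j, 1 ≤ j → j ≤ m - 1 →
      x j = 2 ^ (m - j) * (∏ i ∈ Finset.range j, (x i + 2)) + 3 := by
  intro j h1
  induction j, h1 using Nat.le_induction with
  | base =>
    intro _
    have hx0 : x 0 = 2 ^ m + 3 := by simp [hx 0]
    have hx1 : x 1 = Q (2 ^ m + 3) := by simp [hx 1]
    rw [hx1, show (2:ℕ)^m + 3 = 2^m * 1 + 3 by ring, Q_key m 1 (by omega)]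
    simp [Finset.prod_range_one, hx0]
  | succ j hj ih =>
    intro hle
    have hxj := ih (by omega)
    have hQ : x (j + 1) = Q (x j) := by
      rw [hx (j + 1), hx j, Function.iterate_succ_apply']
    rw [hQ, Finset.prod_range_succ, hxj, Q_key (m - j) _ (by omega)]
    have h3 : m - j - 1 = m - (j + 1) := by omega
    rw [h3]; ring
end

section
/- Let m ≥ 2 and let x_j = Q^[j](2^m + 3) for j ≥ 0. Then x_m = x_{m−1}·[(x₀ + 2)(x₁ + 2)⋯(x_{m−2} + 2) + 1]. -/
lemma Q_odd_form (c P : ℕ) : Q (2 * c * P + 3) = (2 * c * P + 3) * (c * P + 1) := by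
  have hodd : ¬ Even (2 * c * P + 3) := by
    simp [Nat.even_add, Nat.even_mul, parity_simps]
  rw [Q, if_neg hodd]
  have h1 : 2 * c * P + 3 - 1 = 2 * (c * P + 1) := by rw [mul_assoc]; omega
  rw [h1, show (2 * c * P + 3) * (2 * (c * P + 1)) = 2 * ((2 * c * P + 3) * (c * P + 1)) by
    ring, Nat.mul_div_cancel_left _ (by norm_num)]

lemma key (m : ℕ) : ∀ j, j < m →
    Q^[j] (2 ^ m + 3) = 2 ^ (m - j) * (∏ i ∈ Finset.range j, (Q^[i] (2 ^ m + 3) + 2)) + 3 := by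
  intro j
  induction j with
  | zero => intro _; simp
  | succ j ih =>
    intro hj
    have hjm : j < m := Nat.lt_of_succ_lt hj
    have ihj := ih hjm
    obtain ⟨c, hc⟩ : ∃ c, m - j = c + 2 := ⟨m - j - 2, by omega⟩
    have h2 : (2:ℕ) ^ (m - j) = 2 * (2 * 2 ^ c) := by rw [hc]; ring
    rw [Function.iterate_succ_apply', ihj, h2, Q_odd_form, Finset.prod_range_succ,
      ihj, h2, show m - (j + 1) = c + 1 by omega]
    ring

theorem stmt_7 (m : ℕ) (hm : 2 ≤ m) (x : ℕ → ℕ) (hx : ∀ j, x j = Q^[j] (2 ^ m + 3)) :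
    x m = x (m - 1) * ((∏ i ∈ Finset.range (m - 1), (x i + 2)) + 1) := by
  have h1 := key m (m - 1) (by omega)
  have hprod : ∏ i ∈ Finset.range (m - 1), (x i + 2)
      = ∏ i ∈ Finset.range (m - 1), (Q^[i] (2 ^ m + 3) + 2) := by
    apply Finset.prod_congr rfl
    intro i _
    rw [hx i]
  set P := ∏ i ∈ Finset.range (m - 1), (Q^[i] (2 ^ m + 3) + 2) with hP
  have hm1 : m - (m - 1) = 1 := by omega
  have hit := Function.iterate_succ_apply' Q (m - 1) (2 ^ m + 3)
  rw [show (m - 1).succ = m by omega] at hit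
  rw [hx m, hx (m - 1), hprod, h1, hm1, hit, h1, hm1,
    show (2:ℕ) ^ 1 * P = 2 * 1 * P by ring, Q_odd_form]
  ring
end

section
/- For every m ≥ 1, the m-th iterate of S at 2^m + 1 equals 2^(m−1) + 1, i.e. S^[m](2^m + 1) = 2^(m−1) + 1. -/
/-- The symmetric rule: `S n = n / 2` if `n` is even,
`S n = (n ^ 2 - 1) / 4` if `n` is odd. -/
def S (n : ℕ) : ℕ := if Even n then n / 2 else (n ^ 2 - 1) / 4

lemma halve (j x y : ℕ) : S^[j] (2 ^ (x + j) + 2 ^ (y + j)) = 2 ^ x + 2 ^ y := by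
  induction j with
  | zero => simp
  | succ j ih =>
    rw [Function.iterate_succ_apply]
    have hx : 2 ^ (x + (j + 1)) = 2 * 2 ^ (x + j) := by ring
    have hy : 2 ^ (y + (j + 1)) = 2 * 2 ^ (y + j) := by ring
    have hS : S (2 ^ (x + (j + 1)) + 2 ^ (y + (j + 1))) = 2 ^ (x + j) + 2 ^ (y + j) := by
      unfold S
      rw [if_pos ⟨2 ^ (x + j) + 2 ^ (y + j), by omega⟩]
      omega
    rw [hS, ih]

theorem stmt_9 (m : ℕ) (hm : 1 ≤ m) :
    S^[m] (2 ^ m + 1) = 2 ^ (m - 1) + 1 := by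
  obtain ⟨k, rfl⟩ : ∃ k, m = k + 1 := ⟨m - 1, by omega⟩
  rw [Function.iterate_succ_apply]
  have hS : S (2 ^ (k + 1) + 1) = 2 ^ (k + k) + 2 ^ (0 + k) := by
    unfold S
    have hodd : ¬ Even (2 ^ (k + 1) + 1) := by
      simp [Nat.even_add_one, Nat.even_pow]
    rw [if_neg hodd]
    have h1 : (2 ^ (k + 1) + 1) ^ 2 = 4 * (2 ^ (k + k) + 2 ^ (0 + k)) + 1 := by
      have : 2 ^ (k + 1) = 2 * 2 ^ k := by ring
      have h2 : 2 ^ (k + k) = 2 ^ k * 2 ^ k := by rw [pow_add]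
      have h3 : (0 : ℕ) + k = k := by omega
      rw [this, h2, h3]; ring
    omega
  rw [hS, halve]
  simp
end

section
/- For every positive integer m, if x₀ = 2^m + 1 then the orbit of x₀ under S reaches 0 and stays there: S^[n](x₀) = 0 for all n ≥ m(m+1)/2 + 2. -/
lemma S_zero : S 0 = 0 := by simp [S]

lemma S_iter_zero (k : ℕ) : S^[k] 0 = 0 := by
  induction k with
  | zero => rfl
  | succ k ih => rw [Function.iterate_succ_apply, S_zero, ih]

lemma S_halve (k x : ℕ) : S^[k] (2 ^ k * x) = x := by
  induction k with
  | zero => simp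
  | succ k ih =>
    rw [Function.iterate_succ_apply]
    have hev : Even (2 ^ (k + 1) * x) := ⟨2 ^ k * x, by ring⟩
    have hS : S (2 ^ (k + 1) * x) = 2 ^ k * x := by
      simp only [S, if_pos hev]
      have h : 2 ^ (k + 1) * x = 2 * (2 ^ k * x) := by ring
      omega
    rw [hS, ih]

lemma S_step (k : ℕ) : S^[k + 1] (2 ^ (k + 1) + 1) = 2 ^ k + 1 := by
  rw [Function.iterate_succ_apply]
  have hodd : ¬ Even (2 ^ (k + 1) + 1) := by
    simp [Nat.even_add_one, Nat.even_pow]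
  have hS : S (2 ^ (k + 1) + 1) = 2 ^ k * (2 ^ k + 1) := by
    simp only [S, if_neg hodd]
    have h1 : (2 ^ (k + 1) + 1) ^ 2 - 1 = 4 * (2 ^ k * (2 ^ k + 1)) := by
      have : (2 ^ (k + 1) + 1) ^ 2 = 4 * (2 ^ k * (2 ^ k + 1)) + 1 := by ring
      omega
    rw [h1, Nat.mul_div_cancel_left _ (by norm_num)]
  rw [hS, S_halve]

lemma S_main (m : ℕ) (hm : 1 ≤ m) : S^[m * (m + 1) / 2 + 2] (2 ^ m + 1) = 0 := by
  induction m, hm using Nat.le_induction with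
  | base => decide
  | succ m hm ih =>
    have h2 : (m + 1) * (m + 1 + 1) = m * (m + 1) + 2 * (m + 1) := by ring
    have harith : (m + 1) * (m + 1 + 1) / 2 + 2 = (m * (m + 1) / 2 + 2) + (m + 1) := by
      omega
    rw [harith, Function.iterate_add_apply, S_step, ih]

theorem stmt_10 (m : ℕ) (hm : 1 ≤ m) :
    ∀ n : ℕ, m * (m + 1) / 2 + 2 ≤ n → S^[n] (2 ^ m + 1) = 0 := by
  intro n hn
  have h : n = (n - (m * (m + 1) / 2 + 2)) + (m * (m + 1) / 2 + 2) := by omega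
  rw [h, Function.iterate_add_apply, S_main m hm, S_iter_zero]
end

section
/- For every m ≥ 1 and every odd k ∈ ℕ, the m-th iterate of S at the odd number 2^m·k − 1 equals k·(2^(m−1)·k − 1), i.e. S^[m](2^m·k − 1) = k·(2^(m−1)·k − 1). -/
lemma S_halve_s12 : ∀ (j t : ℕ), S^[j] (2 ^ j * t) = t := by
  intro j
  induction j with
  | zero => simp
  | succ j ih =>
    intro t
    rw [Function.iterate_succ_apply]
    have h : S (2 ^ (j + 1) * t) = 2 ^ j * t := by
      unfold S
      rw [if_pos ⟨2 ^ j * t, by ring⟩]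
      have h2 : 2 ^ (j + 1) * t = 2 * (2 ^ j * t) := by ring
      rw [h2, Nat.mul_div_cancel_left _ two_pos]
    rw [h, ih]

theorem stmt_12 (m k : ℕ) (hm : 1 ≤ m) (hk : Odd k) :
    S^[m] (2 ^ m * k - 1) = k * (2 ^ (m - 1) * k - 1) := by
  obtain ⟨n, rfl⟩ : ∃ n, m = n + 1 := ⟨m - 1, by omega⟩
  simp only [Nat.add_sub_cancel]
  have hk1 : 1 ≤ k := hk.pos
  have ha1 : 1 ≤ 2 ^ n * k := Nat.mul_pos (pow_pos two_pos n) hk1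
  obtain ⟨b, hb⟩ : ∃ b, 2 ^ n * k = b + 1 := ⟨2 ^ n * k - 1, by omega⟩
  have h2 : 2 ^ (n + 1) * k = 2 * (b + 1) := by
    rw [pow_succ, mul_comm (2 ^ n) 2, mul_assoc, hb]
  have hodd : ¬ Even (2 ^ (n + 1) * k - 1) := by
    rw [h2]
    simp [Nat.even_sub (by omega : 1 ≤ 2 * (b + 1))]
  rw [Function.iterate_succ_apply]
  have hS : S (2 ^ (n + 1) * k - 1) = 2 ^ n * (k * b) := by
    unfold S
    rw [if_neg hodd, h2]
    have h3 : (2 * (b + 1) - 1) ^ 2 - 1 = 4 * ((b + 1) * b) := by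
      have h4 : 2 * (b + 1) - 1 = 2 * b + 1 := by omega
      rw [h4]
      have h5 : (2 * b + 1) ^ 2 = 4 * ((b + 1) * b) + 1 := by ring
      rw [h5, Nat.add_sub_cancel]
    rw [h3]
    have h6 : 2 ^ n * (k * b) = (b + 1) * b := by rw [← mul_assoc, hb]
    omega
  rw [hS, S_halve_s12, hb]
  simp [Nat.add_sub_cancel]
end

section
/- For every m ≥ 1 and every odd k ≥ 3, the m-th iterate of S at x₀ = 2^m·k − 1 satisfies S^[m](x₀) ≥ 2^m·k = x₀ + 1; that is, the lowest point of the down-swing following x₀ strictly exceeds x₀. -/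
theorem stmt_13 (m k : ℕ) (hm : 1 ≤ m) (hk : Odd k) (hk3 : 3 ≤ k) :
    2 ^ m * k ≤ S^[m] (2 ^ m * k - 1) ∧ 2 ^ m * k = (2 ^ m * k - 1) + 1 := by
  have iterS : ∀ j b : ℕ, S^[j] (2 ^ j * b) = b := by
    intro j
    induction j with
    | zero => intro b; simp
    | succ n ih =>
      intro b
      have h1 : (2 : ℕ) ^ (n + 1) * b = 2 * (2 ^ n * b) := by ring
      have h2 : S (2 ^ (n + 1) * b) = 2 ^ n * b := by
        rw [h1, S]
        simp [Nat.even_iff]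
      rw [Function.iterate_succ_apply, h2, ih]
  obtain ⟨m', rfl⟩ : ∃ m', m = m' + 1 := ⟨m - 1, by omega⟩
  have ht : 1 ≤ 2 ^ m' * k := Nat.one_le_iff_ne_zero.mpr (by positivity)
  obtain ⟨u, hu⟩ : ∃ u, 2 ^ m' * k = u + 1 := ⟨2 ^ m' * k - 1, by omega⟩
  have hx : 2 ^ (m' + 1) * k - 1 = 2 * u + 1 := by
    have : (2 : ℕ) ^ (m' + 1) * k = 2 * (2 ^ m' * k) := by ring
    omega
  have hS1 : S (2 * u + 1) = 2 ^ m' * (k * u) := by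
    rw [S]
    have hodd : ¬ Even (2 * u + 1) := by simp [Nat.even_iff]
    rw [if_neg hodd]
    have h4 : (2 * u + 1) ^ 2 - 1 = 4 * (u * (u + 1)) := by ring_nf; omega
    rw [h4, Nat.mul_div_cancel_left _ (by norm_num)]
    rw [← hu]; ring
  have key : S^[m' + 1] (2 ^ (m' + 1) * k - 1) = k * u := by
    rw [hx, Function.iterate_succ_apply, hS1, iterS]
  rw [key]
  constructor
  · -- 2^(m'+1) * k ≤ k * u, where u = 2^m' * k - 1
    have h1 : 2 ^ (m' + 1) ≤ u := by
      have hp : (1 : ℕ) ≤ 2 ^ m' := Nat.one_le_two_pow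
      have : 3 * 2 ^ m' ≤ 2 ^ m' * k := by
        calc 3 * 2 ^ m' ≤ k * 2 ^ m' := Nat.mul_le_mul_right _ hk3
        _ = 2 ^ m' * k := by ring
      have hpow : (2 : ℕ) ^ (m' + 1) = 2 * 2 ^ m' := by ring
      omega
    calc 2 ^ (m' + 1) * k ≤ u * k := Nat.mul_le_mul_right _ h1
    _ = k * u := by ring
  · omega
end

section
/- If the orbit of x₀ ∈ ℕ under S is bounded, then the orbit reaches 0: there exists N ∈ ℕ with S^[N](x₀) = 0. Equivalently, every orbit of S either reaches 0 or is unbounded. -/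
open Function Set

section SelfMap

variable {α : Type*} {f : α → α}

theorem exists_isPeriodicPt_iterate_of_finite_range {x : α}
    (h : (range fun n => f^[n] x).Finite) : ∃ i p, 0 < p ∧ IsPeriodicPt f p (f^[i] x) := by
  obtain ⟨i, j, hij, heq⟩ :=
    h.exists_lt_map_eq_of_forall_mem (f := fun n => f^[n] x) fun n => mem_range_self n
  refine ⟨i, j - i, by omega, ?_⟩
  change f^[j - i] (f^[i] x) = f^[i] x
  rw [← iterate_add_apply, Nat.sub_add_cancel hij.le]
  exact heq.symm

theorem mapsTo_range_iterate (a : α) :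
    MapsTo f (range fun n => f^[n] a) (range fun n => f^[n] a) := by
  rintro _ ⟨k, rfl⟩
  exact ⟨k + 1, iterate_succ_apply' f k a⟩

theorem Function.IsPeriodicPt.surjOn_range_iterate {p : ℕ} {a : α} (hp : 0 < p)
    (ha : IsPeriodicPt f p a) : SurjOn f (range fun n => f^[n] a) (range fun n => f^[n] a) := by
  rintro _ ⟨k, rfl⟩
  refine ⟨f^[k + p - 1] a, mem_range_self _, ?_⟩
  rw [← iterate_succ_apply' f, Nat.succ_eq_add_one, Nat.sub_add_cancel (by omega),
    iterate_add_apply, ha.eq]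

end SelfMap

theorem S_two_mul (n : ℕ) : S (2 * n) = n := by
  simp [S]

theorem S_two_mul_add_one (k : ℕ) : S (2 * k + 1) = k * (k + 1) := by
  have hsq : (2 * k + 1) ^ 2 - 1 = 4 * (k * (k + 1)) := by
    rw [show (2 * k + 1) ^ 2 = 4 * (k * (k + 1)) + 1 by ring, Nat.add_sub_cancel]
  simp [S, hsq]

theorem S_iterate_two_pow_mul (t x : ℕ) : S^[t] (2 ^ t * x) = x := by
  induction t with
  | zero => simp
  | succ t ih => rw [iterate_succ_apply, pow_succ', mul_assoc, S_two_mul, ih]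

theorem S_iterate_two_pow_add_one (b : ℕ) : S^[b + 1] (2 ^ (b + 1) + 1) = 2 ^ b + 1 := by
  rw [iterate_succ_apply, pow_succ', S_two_mul_add_one, S_iterate_two_pow_mul]

theorem S_iterate_two_pow_sub_one (b : ℕ) : S^[b + 1] (2 ^ (b + 1) - 1) = 2 ^ b - 1 := by
  have hpos := Nat.one_le_two_pow (n := b)
  rw [iterate_succ_apply, show 2 ^ (b + 1) - 1 = 2 * (2 ^ b - 1) + 1 by rw [pow_succ']; omega,
    S_two_mul_add_one, Nat.sub_add_cancel hpos, mul_comm, S_iterate_two_pow_mul]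

theorem Nat.exists_eq_two_pow_mul_of_mul_odd {e o j m : ℕ} (ho : Odd o)
    (h : e * o = 2 ^ j * m) : ∃ w, e = 2 ^ j * w ∧ w * o = m := by
  have hcop : Nat.Coprime (2 ^ j) o := Nat.Coprime.pow_left _ (Nat.coprime_two_left.2 ho)
  obtain ⟨w, rfl⟩ := hcop.dvd_of_dvd_mul_right ⟨m, h⟩
  refine ⟨w, rfl, Nat.eq_of_mul_eq_mul_left (Nat.two_pow_pos j) ?_⟩
  rw [← h]
  ring

theorem add_one_eq_two_pow_or_eq_two_pow_add_one {k j m : ℕ} (hm : Odd m)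
    (h : k * (k + 1) = 2 ^ j * m) (hle : m ≤ 2 * k + 1) : m + 1 = 2 ^ j ∨ m = 2 ^ j + 1 := by
  rcases Nat.even_or_odd k with hk | hk
  · obtain ⟨w, hkw, hwm⟩ := Nat.exists_eq_two_pow_mul_of_mul_odd hk.add_one h
    obtain rfl : w = 1 := by
      rcases Nat.lt_trichotomy w 1 with hw | hw | hw
      · obtain rfl : w = 0 := by omega
        simp [← hwm] at hm
      · exact hw
      · nlinarith
    right
    omega
  · obtain ⟨w, hkw, hwm⟩ :=
      Nat.exists_eq_two_pow_mul_of_mul_odd (e := k + 1) (m := m) hk (by rw [mul_comm, h])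
    have hw : Odd w := (Nat.odd_mul.1 (hwm ▸ hm)).1
    obtain rfl : w = 1 := by
      by_contra hw1
      have hw3 : 3 ≤ w := by obtain ⟨c, rfl⟩ := hw; omega
      have hk1 : k = 1 := by obtain ⟨c, rfl⟩ := hk; nlinarith
      subst hk1
      have := Nat.one_le_two_pow (n := j)
      nlinarith
    left
    omega

theorem exists_iterate_S_lt_of_odd {m k j : ℕ} (hm : Odd m) (h : k * (k + 1) = 2 ^ j * m)
    (hle : m ≤ 2 * k + 1) : ∃ n, S^[n] m < m := by
  have hj : j ≠ 0 := by
    rintro rfl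
    rw [pow_zero, one_mul] at h
    exact Nat.not_even_iff_odd.2 hm (h ▸ Nat.even_mul_succ_self k)
  obtain ⟨b, rfl⟩ := Nat.exists_eq_succ_of_ne_zero hj
  have hpos := Nat.one_le_two_pow (n := b)
  refine ⟨b + 1, ?_⟩
  rcases add_one_eq_two_pow_or_eq_two_pow_add_one hm h hle with hm' | rfl
  · rw [show m = 2 ^ (b + 1) - 1 by omega, S_iterate_two_pow_sub_one, pow_succ]
    omega
  · rw [S_iterate_two_pow_add_one, pow_succ]
    omega

theorem exists_odd_S_eq_two_pow_mul {C : Set ℕ} (hC : C.Finite) (hsurj : SurjOn S C C)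
    {x : ℕ} (hx : x ∈ C) (hx0 : x ≠ 0) : ∃ r ∈ C, Odd r ∧ ∃ j, S r = 2 ^ j * x := by
  by_contra! hodd
  have hmem : ∀ t, 2 ^ t * x ∈ C := by
    intro t
    induction t with
    | zero => simpa using hx
    | succ t ih =>
      obtain ⟨z, hzC, hz⟩ := hsurj ih
      obtain ⟨c, rfl⟩ : Even z := Nat.not_odd_iff_even.1 fun hz' => hodd z hzC hz' t hz
      rw [← two_mul, S_two_mul] at hz
      rwa [pow_succ', mul_assoc, ← hz, two_mul]
  exact hC.not_infinite <| infinite_of_injective_forall_mem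
    ((mul_left_injective₀ hx0).comp (Nat.pow_right_injective le_rfl)) hmem

theorem zero_mem_of_surjOn {C : Set ℕ} (hC : C.Finite) (hne : C.Nonempty) (hmaps : MapsTo S C C)
    (hsurj : SurjOn S C C) : 0 ∈ C := by
  set m := sInf C
  have hmC : m ∈ C := Nat.sInf_mem hne
  by_contra h0
  have hm0 : m ≠ 0 := fun h => h0 (h ▸ hmC)
  have hmodd : Odd m := by
    refine Nat.not_even_iff_odd.1 fun ⟨c, hc⟩ => ?_
    have := Nat.sInf_le (hmaps hmC)
    rw [hc, ← two_mul, S_two_mul] at this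
    omega
  obtain ⟨r, hrC, ⟨k, rfl⟩, j, hr⟩ := exists_odd_S_eq_two_pow_mul hC hsurj hmC hm0
  rw [S_two_mul_add_one] at hr
  obtain ⟨n, hn⟩ := exists_iterate_S_lt_of_odd hmodd hr (Nat.sInf_le hrC)
  exact (Nat.sInf_le (hmaps.iterate n hmC)).not_gt hn

theorem stmt_14 (x₀ : ℕ) (B : ℕ) (hB : ∀ n : ℕ, S^[n] x₀ ≤ B) :
    ∃ N : ℕ, S^[N] x₀ = 0 := by
  have hfin : (range fun n => S^[n] x₀).Finite :=
    (finite_Iic B).subset (range_subset_iff.2 hB)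
  obtain ⟨i, p, hp, hper⟩ := exists_isPeriodicPt_iterate_of_finite_range hfin
  have hcycle : (range fun n => S^[n] (S^[i] x₀)).Finite :=
    hfin.subset (range_subset_iff.2 fun n => ⟨n + i, iterate_add_apply S n i x₀⟩)
  obtain ⟨k, hk⟩ := zero_mem_of_surjOn hcycle (range_nonempty _) (mapsTo_range_iterate _)
    (hper.surjOn_range_iterate hp)
  exact ⟨k + i, by rwa [iterate_add_apply]⟩
end

section
/- If x₀ is an odd number written as x₀ = 2^(m₀)·k₀ + 1 with m₀ ≥ 1 and k₀ odd, and if along the orbit of x₀ under Q each successive odd value obtained by this process has odd part greater than 1 (i.e. the process never produces k_p = 1), then the orbit grows without bound: for every p ∈ ℕ there exists an index n with Q^[n](x₀) ≥ 3^(p+1)·x₀. In particular such an orbit is unbounded. -/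
lemma Q_two_mul (a : ℕ) : Q (2 * a) = a := by
  simp [Q, even_two_mul a]

lemma Q_of_odd {x : ℕ} (hx : Odd x) : Q x = x * (x - 1) / 2 := by
  rw [Q, if_neg (Nat.not_even_iff_odd.mpr hx)]

lemma iterate_Q_two_pow_mul (j a : ℕ) : Q^[j] (2 ^ j * a) = a := by
  induction j generalizing a with
  | zero => simp
  | succ j ih =>
    rw [Function.iterate_succ_apply, pow_succ', mul_assoc, Q_two_mul, ih]

lemma odd_two_pow_mul_add_one {m : ℕ} (hm : m ≠ 0) (k : ℕ) : Odd (2 ^ m * k + 1) :=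
  ((Nat.even_pow.mpr ⟨even_two, hm⟩).mul_right k).add_one

lemma iterate_Q_two_pow_mul_add_one {m : ℕ} (hm : m ≠ 0) (k : ℕ) :
    Q^[m] (2 ^ m * k + 1) = k * (2 ^ m * k + 1) := by
  obtain ⟨j, rfl⟩ : ∃ j, m = j + 1 := ⟨m - 1, by omega⟩
  have hQ : Q (2 ^ (j + 1) * k + 1) = 2 ^ j * (k * (2 ^ (j + 1) * k + 1)) := by
    rw [Q_of_odd (odd_two_pow_mul_add_one hm k), Nat.add_sub_cancel]
    exact Nat.div_eq_of_eq_mul_right two_pos (by ring)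
  rw [Function.iterate_succ_apply, hQ, iterate_Q_two_pow_mul]

lemma Odd.exists_eq_two_pow_mul_odd_add_one {y : ℕ} (hy : Odd y) (h1 : 1 < y) :
    ∃ m k, m ≠ 0 ∧ Odd k ∧ y = 2 ^ m * k + 1 := by
  obtain ⟨m, k, hk, hyk⟩ := Nat.exists_eq_two_pow_mul_odd (n := y - 1) (by omega)
  refine ⟨m, k, ?_, hk, by omega⟩
  rintro rfl
  obtain ⟨a, rfl⟩ := hy
  obtain ⟨b, rfl⟩ := hk
  omega

lemma exists_iterate_Q_odd_three_mul_le {y : ℕ} (hy : Odd y) (h1 : 1 < y)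
    (hy_ne : ∀ m : ℕ, y ≠ 2 ^ m + 1) : ∃ n, Odd (Q^[n] y) ∧ 3 * y ≤ Q^[n] y := by
  obtain ⟨m, k, hm, hk, rfl⟩ := hy.exists_eq_two_pow_mul_odd_add_one h1
  have hk3 : 3 ≤ k := by
    have hk1 : k ≠ 1 := by
      rintro rfl
      exact hy_ne m (by rw [mul_one])
    obtain ⟨a, rfl⟩ := hk
    omega
  refine ⟨m, ?_, ?_⟩ <;> rw [iterate_Q_two_pow_mul_add_one hm]
  · exact hk.mul hy
  · exact Nat.mul_le_mul_right _ hk3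

lemma exists_iterate_Q_odd_three_pow_mul_le {x : ℕ} (hx : Odd x) (h1 : 1 < x)
    (hproc : ∀ n : ℕ, Odd (Q^[n] x) → ∀ m : ℕ, Q^[n] x ≠ 2 ^ m + 1) (p : ℕ) :
    ∃ n, Odd (Q^[n] x) ∧ 3 ^ p * x ≤ Q^[n] x := by
  induction p with
  | zero => exact ⟨0, hx, by simp⟩
  | succ p ih =>
    obtain ⟨n, hodd, hle⟩ := ih
    have hx_le : x ≤ 3 ^ p * x := Nat.le_mul_of_pos_left x (by positivity)
    obtain ⟨m, hodd', hle'⟩ :=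
      exists_iterate_Q_odd_three_mul_le hodd (by omega) (hproc n hodd)
    refine ⟨m + n, by rwa [Function.iterate_add_apply], ?_⟩
    rw [Function.iterate_add_apply, pow_succ', mul_assoc]
    omega

/-- For an odd value `x = 2^m * k + 1` with `m ≥ 1` and `k` odd, the process of the
paper produces `k = 1` exactly when `x = 2^m + 1`, i.e. when `x - 1` is a power of `2`.
The hypothesis that the process never produces `k_p = 1` says that no odd value of the
orbit is of the form `2^m + 1`. -/
theorem stmt_16 (x₀ m₀ k₀ : ℕ) (hm₀ : 1 ≤ m₀) (hk₀ : Odd k₀)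
    (hx₀ : x₀ = 2 ^ m₀ * k₀ + 1)
    (hproc : ∀ n : ℕ, Odd (Q^[n] x₀) → ∀ m : ℕ, Q^[n] x₀ ≠ 2 ^ m + 1) :
    ∀ p : ℕ, ∃ n : ℕ, 3 ^ (p + 1) * x₀ ≤ Q^[n] x₀ := by
  intro p
  have hodd : Odd x₀ := hx₀ ▸ odd_two_pow_mul_add_one (by omega) k₀
  have h1 : 1 < x₀ := by
    have : 0 < 2 ^ m₀ * k₀ := Nat.mul_pos (by positivity) hk₀.pos
    omega
  obtain ⟨n, -, hle⟩ := exists_iterate_Q_odd_three_pow_mul_le hodd h1 hproc (p + 1)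
  exact ⟨n, hle⟩
end
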